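/- Let α, γ, μ be reals with μ > 0, α ≥ γ + μ/√2, and let T_max = (α − γ) + √((α − γ)² − μ²/2). Then (1/2)·(μ²/T_max + 3·T_max + 2γ) ≤ 3α. -/

import Mathlib

/-!
Write `b = α - γ` and `s = √(b² - μ²/2)`, so `T_max = b + s`. Since `(b + s)(b - s) = μ²/2`,
the term `μ²/T_max` equals `2(b - s)`, and the left-hand side collapses to `(5b + s)/2 + γ`.
As `s ≤ b` this is at most `3b + γ`, which is at most `3α = 3b + 3γ` because `γ ≥ 0`.
-/

open Real

theorem div_add_sqrt_sq_sub {b c : ℝ} (hb : 0 < b) (hc : c ≤ b ^ 2) :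
    c / (b + √(b ^ 2 - c)) = b - √(b ^ 2 - c) := by
  have hs : √(b ^ 2 - c) ^ 2 = b ^ 2 - c := sq_sqrt (by linarith)
  rw [div_eq_iff (by positivity)]
  linear_combination hs

theorem sqrt_sq_sub_le {b c : ℝ} (hb : 0 ≤ b) (hc : 0 ≤ c) : √(b ^ 2 - c) ≤ b :=
  calc √(b ^ 2 - c) ≤ √(b ^ 2) := sqrt_le_sqrt (by linarith)
    _ = b := sqrt_sq hb

theorem sq_div_two_le_of_div_sqrt_two_le {μ b : ℝ} (hμ : 0 ≤ μ) (h : μ / √2 ≤ b) :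
    μ ^ 2 / 2 ≤ b ^ 2 :=
  calc μ ^ 2 / 2 = (μ / √2) ^ 2 := by rw [div_pow, sq_sqrt zero_le_two]
    _ ≤ b ^ 2 := pow_le_pow_left₀ (by positivity) h 2

/-- 3-competitiveness key algebraic step: with γ ≥ 0, μ > 0, α ≥ γ + μ/√2 and
T_max = (α − γ) + √((α − γ)² − μ²/2), we have (1/2)(μ²/T_max + 3T_max + 2γ) ≤ 3α. -/
theorem stmt_3 (α γ μ : ℝ) (hμ : μ > 0) (hγ : γ ≥ 0) (hα : α ≥ γ + μ / Real.sqrt 2)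
    (Tmax : ℝ) (hT : Tmax = (α - γ) + Real.sqrt ((α - γ)^2 - μ^2/2)) :
    (1/2) * (μ^2/Tmax + 3*Tmax + 2*γ) ≤ 3*α := by
  have hgap : μ / √2 ≤ α - γ := by linarith
  have hb : 0 < α - γ := lt_of_lt_of_le (by positivity) hgap
  have hs : √((α - γ) ^ 2 - μ ^ 2 / 2) ≤ α - γ := sqrt_sq_sub_le hb.le (by positivity)
  have hdiv : μ ^ 2 / Tmax = 2 * ((α - γ) - √((α - γ) ^ 2 - μ ^ 2 / 2)) := by
    rw [hT, ← div_add_sqrt_sq_sub hb (sq_div_two_le_of_div_sqrt_two_le hμ.le hgap)]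
    ring
  rw [hdiv, hT]
  linarith
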